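/- Let γ, φ, ν, σ > 0 and set θ = γ + φ. In the steady state of the optimal strategy driven by an OU signal with variance parameter ν²/(2φ), the steady-state information ratio equals (ν/(2σ))·sqrt(γ/(2φ(φ + 2γ))). Concretely: with c₀ = ν²/(2φ λ²(γ+φ)²), h̄ = c₀/(θ+γ), ḡ = h̄/γ, v̄ = θ h̄, and profitability rate p̄ = λ(γ+φ) h̄, one has (p̄ − (λ/2) v̄)/(σ sqrt(ḡ)) = (ν/(2σ)) sqrt(γ/(2φ(φ+2γ))). -/
import Mathlib


/-- Steady-state information ratio for an OU-driven optimal strategy: with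
`c₀ = ν²/(2φλ²(γ+φ)²)`, `θ = γ+φ`, `h̄ = c₀/(θ+γ)`, `ḡ = h̄/γ`, `v̄ = θh̄`, and
profitability rate `p̄ = λ(γ+φ)h̄`, one has
`(p̄ - (λ/2)v̄)/(σ sqrt ḡ) = (ν/(2σ))·sqrt(γ/(2φ(φ+2γ)))`. -/
theorem steady_state_information_ratio (γ φ ν σ lam : ℝ)
    (hγ : 0 < γ) (hφ : 0 < φ) (hν : 0 < ν) (hσ : 0 < σ) (hlam : 0 < lam)
    (θ c₀ hbar gbar vbar pbar : ℝ)
    (hθ : θ = γ + φ)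
    (hc₀ : c₀ = ν ^ 2 / (2 * φ * lam ^ 2 * (γ + φ) ^ 2))
    (hh : hbar = c₀ / (θ + γ)) (hg : gbar = hbar / γ) (hv : vbar = θ * hbar)
    (hp : pbar = lam * (γ + φ) * hbar) :
    (pbar - (lam / 2) * vbar) / (σ * Real.sqrt gbar) =
      (ν / (2 * σ)) * Real.sqrt (γ / (2 * φ * (φ + 2 * γ))) := by
  subst hθ hc₀ hh hg hv hp
  have hgpos : 0 < ν ^ 2 / (2 * φ * lam ^ 2 * (γ + φ) ^ 2) / (γ + φ + γ) / γ := by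
    positivity
  have hrpos : 0 < γ / (2 * φ * (φ + 2 * γ)) := by positivity
  have hnum : 0 ≤ lam * (γ + φ) * (ν ^ 2 / (2 * φ * lam ^ 2 * (γ + φ) ^ 2) / (γ + φ + γ)) -
      lam / 2 * ((γ + φ) * (ν ^ 2 / (2 * φ * lam ^ 2 * (γ + φ) ^ 2) / (γ + φ + γ))) := by
    have h : lam * (γ + φ) * (ν ^ 2 / (2 * φ * lam ^ 2 * (γ + φ) ^ 2) / (γ + φ + γ)) -
        lam / 2 * ((γ + φ) * (ν ^ 2 / (2 * φ * lam ^ 2 * (γ + φ) ^ 2) / (γ + φ + γ))) =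
        lam / 2 * (γ + φ) * (ν ^ 2 / (2 * φ * lam ^ 2 * (γ + φ) ^ 2) / (γ + φ + γ)) := by
      ring
    rw [h]; positivity
  have hL : 0 ≤ (lam * (γ + φ) * (ν ^ 2 / (2 * φ * lam ^ 2 * (γ + φ) ^ 2) / (γ + φ + γ)) -
      lam / 2 * ((γ + φ) * (ν ^ 2 / (2 * φ * lam ^ 2 * (γ + φ) ^ 2) / (γ + φ + γ)))) /
      (σ * Real.sqrt (ν ^ 2 / (2 * φ * lam ^ 2 * (γ + φ) ^ 2) / (γ + φ + γ) / γ)) := by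
    apply div_nonneg hnum
    positivity
  have hR : 0 ≤ ν / (2 * σ) * Real.sqrt (γ / (2 * φ * (φ + 2 * γ))) := by positivity
  rw [← Real.sqrt_sq hL, ← Real.sqrt_sq hR]
  congr 1
  rw [div_pow, mul_pow, mul_pow, Real.sq_sqrt hgpos.le, Real.sq_sqrt hrpos.le]
  have hsq : Real.sqrt (ν ^ 2 / (2 * φ * lam ^ 2 * (γ + φ) ^ 2) / (γ + φ + γ) / γ) ≠ 0 := by
    positivity
  field_simp
  ring
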